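/- arXiv:2409.16471 — 3 statements merged into one kernel-verified Lean document; each statement's English description precedes it below -/
import Mathlib

section
/- Let ρ be a smooth positive solution of the continuity equation ∂ₜρ + ∇ₓ·(ρ f) = 0 and let z_t solve ∂ₜz_t = f(t,z_t). Then the first-order score s_t := ∇_z log ρ(t, z_t) satisfies the ODE ∂ₜs_t = -(∇_z f(t,z_t))ᵀ s_t - ∇_z(∇_z·f(t,z_t)). -/
open MeasureTheory Matrix Real

/-- Spatial gradient of a scalar function. -/
noncomputable def grad {d : ℕ} (g : (Fin d → ℝ) → ℝ) (x : Fin d → ℝ) : Fin d → ℝ :=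
  fun i => fderiv ℝ g x (Pi.single i 1)

/-- Spatial divergence of a vector field. -/
noncomputable def vdiv {d : ℕ} (F : (Fin d → ℝ) → (Fin d → ℝ)) (x : Fin d → ℝ) : ℝ :=
  ∑ i, fderiv ℝ (fun y => F y i) x (Pi.single i 1)

/-- Spatial Jacobian matrix of a vector field: `(jac F x) i j = ∂ⱼ Fᵢ`. -/
noncomputable def jac {d : ℕ} (F : (Fin d → ℝ) → (Fin d → ℝ)) (x : Fin d → ℝ) :
    Matrix (Fin d) (Fin d) ℝ :=
  Matrix.of fun i j => fderiv ℝ (fun y => F y i) x (Pi.single j 1)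

/-- Spatial Hessian matrix of a scalar function. -/
noncomputable def hess {d : ℕ} (g : (Fin d → ℝ) → ℝ) (x : Fin d → ℝ) :
    Matrix (Fin d) (Fin d) ℝ :=
  Matrix.of fun i j => fderiv ℝ (fun y => grad g y i) x (Pi.single j 1)

/-- Spatial Laplacian of a scalar function. -/
noncomputable def lap {d : ℕ} (g : (Fin d → ℝ) → ℝ) (x : Fin d → ℝ) : ℝ :=
  ∑ i, hess g x i i

/-- Partial derivative in time of a time-dependent scalar function. -/
noncomputable def pt {d : ℕ} (g : ℝ → (Fin d → ℝ) → ℝ) (t : ℝ) (x : Fin d → ℝ) : ℝ :=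
  deriv (fun s => g s x) t

section Aux

variable {d : ℕ}

/-- Slice lemma: the spatial partial derivative of `y ↦ g (s, y)` in direction `v`
is the full derivative of `g` in direction `(0, v)`. -/
theorem slice_fderiv {W : Type*} [NormedAddCommGroup W] [NormedSpace ℝ W]
    (g : ℝ × (Fin d → ℝ) → W) (s : ℝ) (x : Fin d → ℝ)
    (hg : DifferentiableAt ℝ g (s, x)) (v : Fin d → ℝ) :
    fderiv ℝ (fun y => g (s, y)) x v = fderiv ℝ g (s, x) (0, v) := by
  have h : HasFDerivAt (fun y : Fin d → ℝ => g (s, y))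
      ((fderiv ℝ g (s, x)).comp (ContinuousLinearMap.inr ℝ ℝ (Fin d → ℝ))) x :=
    hg.hasFDerivAt.comp x (hasFDerivAt_prodMk_right s x)
  rw [h.fderiv]
  simp

/-- Time slice: `s ↦ g (s, x)` has derivative the full derivative in direction `(1,0)`. -/
theorem time_hasDerivAt {W : Type*} [NormedAddCommGroup W] [NormedSpace ℝ W]
    (g : ℝ × (Fin d → ℝ) → W) (t : ℝ) (x : Fin d → ℝ)
    (hg : DifferentiableAt ℝ g (t, x)) :
    HasDerivAt (fun s => g (s, x)) (fderiv ℝ g (t, x) (1, 0)) t := by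
  have hc : HasDerivAt (fun s : ℝ => (s, x)) ((1 : ℝ), (0 : Fin d → ℝ)) t :=
    (hasDerivAt_id t).prodMk (hasDerivAt_const t x)
  exact hg.hasFDerivAt.comp_hasDerivAt t hc

/-- Core computation lemma, phrased entirely in terms of full-space derivatives. -/
theorem key_score (Λ : ℝ × (Fin d → ℝ) → ℝ) (F : ℝ × (Fin d → ℝ) → (Fin d → ℝ))
    (hΛ : ContDiff ℝ (⊤ : ℕ∞) Λ) (hF : ContDiff ℝ (⊤ : ℕ∞) F)
    (hH : ∀ p : ℝ × (Fin d → ℝ), fderiv ℝ Λ p (1, 0)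
        + ∑ j, fderiv ℝ Λ p (0, Pi.single j 1) * F p j
        + ∑ j, fderiv ℝ (fun q => F q j) p (0, Pi.single j 1) = 0)
    (z : ℝ → Fin d → ℝ) (t : ℝ) (hz : HasDerivAt z (F (t, z t)) t) (i : Fin d) :
    HasDerivAt (fun s => fderiv ℝ Λ (s, z s) (0, Pi.single i 1))
      (-(∑ j, fderiv ℝ (fun q => F q j) (t, z t) (0, Pi.single i 1)
            * fderiv ℝ Λ (t, z t) (0, Pi.single j 1))
        - ∑ j, fderiv ℝ (fun q => fderiv ℝ (fun q' => F q' j) q (0, Pi.single j 1)) (t, z t)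
            (0, Pi.single i 1)) t := by
  classical
  have hΛd : Differentiable ℝ Λ := hΛ.differentiable (by simp)
  have hΦ : ContDiff ℝ (⊤ : ℕ∞) (fderiv ℝ Λ) := hΛ.fderiv_right (by simp)
  have hΦd : Differentiable ℝ (fderiv ℝ Λ) := hΦ.differentiable (by simp)
  set p : ℝ × (Fin d → ℝ) := (t, z t) with hp
  set E : Fin d → ℝ × (Fin d → ℝ) := fun j => (0, Pi.single j 1) with hE
  set S : (ℝ × (Fin d → ℝ)) →L[ℝ] (ℝ × (Fin d → ℝ)) →L[ℝ] ℝ := fderiv ℝ (fderiv ℝ Λ) p with hS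
  have hsym : ∀ v w, S v w = S w v := fun v w =>
    second_derivative_symmetric (fun y => (hΛd y).hasFDerivAt) (hΦd p).hasFDerivAt v w
  have hFj : ∀ j : Fin d, ContDiff ℝ (⊤ : ℕ∞) (fun q => F q j) := fun j => contDiff_pi.mp hF j
  -- the main derivative along the trajectory
  have hc : HasDerivAt (fun s => (s, z s)) ((1 : ℝ), F p) t := (hasDerivAt_id t).prodMk hz
  have hmain : HasDerivAt (fun s => fderiv ℝ Λ (s, z s) (E i)) (S (1, F p) (E i)) t := by
    have h1 : HasDerivAt (fun s : ℝ => fderiv ℝ Λ (s, z s)) (S (1, F p)) t := by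
      have := (hΦd p).hasFDerivAt.comp_hasDerivAt t hc
      simpa [Function.comp_def] using this
    simpa using h1.clm_apply (hasDerivAt_const t (E i))
  -- decomposition of the velocity vector
  have hdecomp : ((1 : ℝ), F p) = (1, 0) + ∑ j, F p j • E j := by
    have h2 : ∀ x : Fin d → ℝ, (0 : Fin d → ℝ) + ∑ j, x j • (Pi.single j (1 : ℝ) : Fin d → ℝ) = x := by
      intro x
      rw [zero_add]
      have : ∀ j : Fin d, x j • (Pi.single j (1:ℝ) : Fin d → ℝ) = Pi.single j (x j) := by
        intro j; ext k
        by_cases hk : k = j <;> simp [Pi.single_apply, hk]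
      simp only [this]
      exact Finset.univ_sum_single x
    ext : 1
    · simp [hE, Prod.fst_sum]
    · simpa [hE, Prod.snd_sum] using (h2 (F p)).symm
  have hval : S (1, F p) (E i) = S (1, 0) (E i) + ∑ j, F p j * S (E j) (E i) := by
    rw [hdecomp]
    simp [ContinuousLinearMap.sum_apply, ContinuousLinearMap.add_apply,
      ContinuousLinearMap.smul_apply, map_add, map_sum, _root_.map_smul, smul_eq_mul]
  -- differentiate the identity hH along the line through p in direction E i
  have hline : HasDerivAt (fun s : ℝ => p + s • E i) (E i) 0 := by
    simpa using ((hasDerivAt_id (0 : ℝ)).smul_const (E i)).const_add p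
  have hpt : p = (fun s : ℝ => p + s • E i) 0 := by simp
  have hA : HasDerivAt (fun s : ℝ => fderiv ℝ Λ (p + s • E i) ((1 : ℝ), (0 : Fin d → ℝ)))
      (S (E i) (1, 0)) 0 := by
    have h1 : HasDerivAt (fun s : ℝ => fderiv ℝ Λ (p + s • E i)) (S (E i)) 0 := by
      have := (hΦd p).hasFDerivAt.comp_hasDerivAt_of_eq 0 hline hpt
      simpa [Function.comp_def] using this
    simpa using h1.clm_apply (hasDerivAt_const 0 ((1 : ℝ), (0 : Fin d → ℝ)))
  have hG : ∀ j, HasDerivAt (fun s : ℝ => fderiv ℝ Λ (p + s • E i) (E j)) (S (E i) (E j)) 0 := by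
    intro j
    have h1 : HasDerivAt (fun s : ℝ => fderiv ℝ Λ (p + s • E i)) (S (E i)) 0 := by
      have := (hΦd p).hasFDerivAt.comp_hasDerivAt_of_eq 0 hline hpt
      simpa [Function.comp_def] using this
    simpa using h1.clm_apply (hasDerivAt_const 0 (E j))
  have hFder : ∀ j, HasDerivAt (fun s : ℝ => F (p + s • E i) j)
      (fderiv ℝ (fun q => F q j) p (E i)) 0 := by
    intro j
    have := (((hFj j).differentiable (by simp)) p).hasFDerivAt.comp_hasDerivAt_of_eq 0 hline hpt
    simpa [Function.comp_def] using this
  have hC : ∀ j, HasDerivAt (fun s : ℝ => fderiv ℝ (fun q => F q j) (p + s • E i) (E j))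
      (fderiv ℝ (fun q => fderiv ℝ (fun q' => F q' j) q (E j)) p (E i)) 0 := by
    intro j
    have hΨ : ContDiff ℝ (⊤ : ℕ∞) (fun q => fderiv ℝ (fun q' => F q' j) q (E j)) :=
      ((hFj j).fderiv_right (by simp)).clm_apply contDiff_const
    have := ((hΨ.differentiable (by simp)) p).hasFDerivAt.comp_hasDerivAt_of_eq 0 hline hpt
    simpa [Function.comp_def] using this
  have hsum : HasDerivAt (fun s : ℝ =>
      fderiv ℝ Λ (p + s • E i) ((1 : ℝ), (0 : Fin d → ℝ))
      + ∑ j, fderiv ℝ Λ (p + s • E i) (E j) * F (p + s • E i) j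
      + ∑ j, fderiv ℝ (fun q => F q j) (p + s • E i) (E j))
      (S (E i) (1, 0)
        + ∑ j, (S (E i) (E j) * F p j
            + fderiv ℝ Λ p (E j) * fderiv ℝ (fun q => F q j) p (E i))
        + ∑ j, fderiv ℝ (fun q => fderiv ℝ (fun q' => F q' j) q (E j)) p (E i)) 0 := by
    have h := (hA.fun_add (HasDerivAt.fun_sum (u := Finset.univ) fun j _ =>
      (hG j).fun_mul (hFder j))).fun_add (HasDerivAt.fun_sum (u := Finset.univ) fun j _ => hC j)
    simpa only [zero_smul, add_zero] using h
  have hzero : (fun s : ℝ =>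
      fderiv ℝ Λ (p + s • E i) ((1 : ℝ), (0 : Fin d → ℝ))
      + ∑ j, fderiv ℝ Λ (p + s • E i) (E j) * F (p + s • E i) j
      + ∑ j, fderiv ℝ (fun q => F q j) (p + s • E i) (E j)) = fun _ : ℝ => (0 : ℝ) :=
    funext fun s => hH (p + s • E i)
  rw [hzero] at hsum
  have hD0 : S (E i) (1, 0)
      + ∑ j, (S (E i) (E j) * F p j
          + fderiv ℝ Λ p (E j) * fderiv ℝ (fun q => F q j) p (E i))
      + ∑ j, fderiv ℝ (fun q => fderiv ℝ (fun q' => F q' j) q (E j)) p (E i) = 0 :=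
    hsum.unique (hasDerivAt_const 0 0)
  -- put everything together
  have hfinal : S (1, F p) (E i)
      = -(∑ j, fderiv ℝ (fun q => F q j) p (E i) * fderiv ℝ Λ p (E j))
        - ∑ j, fderiv ℝ (fun q => fderiv ℝ (fun q' => F q' j) q (E j)) p (E i) := by
    rw [hval, hsym (1, 0) (E i)]
    have e1 : ∑ j, F p j * S (E j) (E i) = ∑ j, S (E i) (E j) * F p j :=
      Finset.sum_congr rfl fun j _ => by rw [hsym (E j) (E i), mul_comm]
    have e2 : ∑ j, fderiv ℝ (fun q => F q j) p (E i) * fderiv ℝ Λ p (E j)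
        = ∑ j, fderiv ℝ Λ p (E j) * fderiv ℝ (fun q => F q j) p (E i) :=
      Finset.sum_congr rfl fun j _ => mul_comm _ _
    rw [e1, e2]
    rw [Finset.sum_add_distrib] at hD0
    linarith
  exact hfinal ▸ hmain

end Aux

/-- the first-order score `s_t = ∇_z log ρ(t, z_t)` satisfies
`∂ₜ s_t = -(∇_z f)ᵀ s_t - ∇_z(∇_z·f)`. -/
theorem first_order_score_dynamics {d : ℕ}
    (f : ℝ → (Fin d → ℝ) → (Fin d → ℝ))
    (ρ : ℝ → (Fin d → ℝ) → ℝ)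
    (z : ℝ → (Fin d → ℝ))
    (hf : ContDiff ℝ (⊤ : ℕ∞) (fun p : ℝ × (Fin d → ℝ) => f p.1 p.2))
    (hρ : ContDiff ℝ (⊤ : ℕ∞) (fun p : ℝ × (Fin d → ℝ) => ρ p.1 p.2))
    (hρpos : ∀ t x, 0 < ρ t x)
    (hcont : ∀ t x, pt ρ t x + vdiv (fun y => ρ t y • f t y) x = 0)
    (hz : ∀ t, HasDerivAt z (f t (z t)) t) :
    ∀ t, HasDerivAt (fun s => grad (fun y => Real.log (ρ s y)) (z s))
      (-((jac (f t) (z t))ᵀ.mulVec (grad (fun y => Real.log (ρ t y)) (z t)))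
        - grad (fun y => vdiv (f t) y) (z t)) t := by
  classical
  set P : ℝ × (Fin d → ℝ) → ℝ := fun p => ρ p.1 p.2 with hPdef
  set F : ℝ × (Fin d → ℝ) → (Fin d → ℝ) := fun p => f p.1 p.2 with hFdef
  set Λ : ℝ × (Fin d → ℝ) → ℝ := fun p => Real.log (P p) with hΛdef
  have hΛ : ContDiff ℝ (⊤ : ℕ∞) Λ := hρ.log fun p => (hρpos p.1 p.2).ne'
  have hΛd : Differentiable ℝ Λ := hΛ.differentiable (by simp)
  have hPd : Differentiable ℝ P := hρ.differentiable (by simp)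
  have hFj : ∀ j : Fin d, ContDiff ℝ (⊤ : ℕ∞) (fun q => F q j) := fun j => contDiff_pi.mp hf j
  have hFjd : ∀ j : Fin d, Differentiable ℝ (fun q => F q j) :=
    fun j => (hFj j).differentiable (by simp)
  -- derivative of Λ in terms of P
  have hlogd : ∀ p : ℝ × (Fin d → ℝ), ∀ v,
      fderiv ℝ Λ p v = (P p)⁻¹ * fderiv ℝ P p v := by
    intro p v
    have h : HasFDerivAt Λ ((P p)⁻¹ • fderiv ℝ P p) p :=
      (hPd p).hasFDerivAt.log (hρpos p.1 p.2).ne'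
    rw [h.fderiv]; simp
  -- grad of log slice equals full derivative of Λ
  have hgrad : ∀ s (x : Fin d → ℝ) (i : Fin d),
      grad (fun y => Real.log (ρ s y)) x i = fderiv ℝ Λ (s, x) (0, Pi.single i 1) := by
    intro s x i
    exact slice_fderiv Λ s x (hΛd (s, x)) (Pi.single i 1)
  -- continuity equation in log form
  have hH : ∀ p : ℝ × (Fin d → ℝ), fderiv ℝ Λ p (1, 0)
      + ∑ j, fderiv ℝ Λ p (0, Pi.single j 1) * F p j
      + ∑ j, fderiv ℝ (fun q => F q j) p (0, Pi.single j 1) = 0 := by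
    rintro ⟨a, x⟩
    have hcont' := hcont a x
    have hρx : DifferentiableAt ℝ (fun y => ρ a y) x := by
      have := (hPd (a, x)).comp x (hasFDerivAt_prodMk_right a x).differentiableAt
      simpa [Function.comp_def] using this
    have hfx : ∀ j, DifferentiableAt ℝ (fun y => f a y j) x := by
      intro j
      have := ((hFjd j) (a, x)).comp x (hasFDerivAt_prodMk_right a x).differentiableAt
      simpa [Function.comp_def] using this
    -- compute pt ρ a x
    have hpt : pt ρ a x = fderiv ℝ P (a, x) (1, 0) := by
      have := time_hasDerivAt P a x (hPd (a, x))
      exact this.deriv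
    -- compute vdiv (ρ a • f a) x
    have hvd : vdiv (fun y => ρ a y • f a y) x
        = ∑ j, (fderiv ℝ P (a, x) (0, Pi.single j 1) * f a x j
            + ρ a x * fderiv ℝ (fun q => F q j) (a, x) (0, Pi.single j 1)) := by
      unfold vdiv
      refine Finset.sum_congr rfl fun j _ => ?_
      have heq : (fun y => (fun y' => ρ a y' • f a y') y j) = fun y => ρ a y * f a y j := by
        funext y; simp
      rw [heq, fderiv_fun_mul hρx (hfx j)]
      have h1 : fderiv ℝ (fun y => ρ a y) x (Pi.single j 1)
          = fderiv ℝ P (a, x) (0, Pi.single j 1) :=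
        slice_fderiv P a x (hPd (a, x)) (Pi.single j 1)
      have h2 : fderiv ℝ (fun y => f a y j) x (Pi.single j 1)
          = fderiv ℝ (fun q => F q j) (a, x) (0, Pi.single j 1) :=
        slice_fderiv (fun q => F q j) a x ((hFjd j) (a, x)) (Pi.single j 1)
      simp only [ContinuousLinearMap.add_apply, ContinuousLinearMap.smul_apply, smul_eq_mul]
      rw [h1, h2]; ring
    rw [hpt, hvd] at hcont'
    -- now pure algebra
    have hne : P (a, x) ≠ 0 := (hρpos a x).ne'
    have hFax : ∀ j, F (a, x) j = f a x j := fun j => rfl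
    simp only [hlogd]
    rw [Finset.sum_add_distrib] at hcont'
    have hmulsum : ∑ j, (P (a,x))⁻¹ * fderiv ℝ P (a,x) (0, Pi.single j 1) * F (a,x) j
        = (P (a,x))⁻¹ * ∑ j, fderiv ℝ P (a,x) (0, Pi.single j 1) * f a x j := by
      rw [Finset.mul_sum]
      exact Finset.sum_congr rfl fun j _ => by rw [hFax, mul_assoc]
    rw [hmulsum]
    have hmulsum2 : ∑ j, ρ a x * fderiv ℝ (fun q => F q j) (a,x) (0, Pi.single j 1)
        = ρ a x * ∑ j, fderiv ℝ (fun q => F q j) (a,x) (0, Pi.single j 1) := by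
      rw [Finset.mul_sum]
    rw [hmulsum2] at hcont'
    have hPax : P (a, x) = ρ a x := rfl
    set A := fderiv ℝ P (a,x) (1, 0)
    set B := ∑ j, fderiv ℝ P (a,x) (0, Pi.single j 1) * f a x j
    set C := ∑ j, fderiv ℝ (fun q => F q j) (a,x) (0, Pi.single j 1)
    rw [hPax]
    have hne' : ρ a x ≠ 0 := hne
    field_simp
    -- goal should now follow from hcont' : A + (B + ρ a x * C) = 0
    linarith [hcont']
  intro t
  rw [hasDerivAt_pi]
  intro i
  have hkey := key_score Λ F hΛ hf hH z t (hz t) i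
  -- rewrite the function
  have hfun : (fun s => grad (fun y => Real.log (ρ s y)) (z s) i)
      = fun s => fderiv ℝ Λ (s, z s) (0, Pi.single i 1) := funext fun s => hgrad s (z s) i
  -- rewrite the value
  have hjac : ∀ j, jac (f t) (z t) j i
      = fderiv ℝ (fun q => F q j) (t, z t) (0, Pi.single i 1) := by
    intro j
    show fderiv ℝ (fun y => f t y j) (z t) (Pi.single i 1) = _
    exact slice_fderiv (fun q => F q j) t (z t) ((hFjd j) (t, z t)) (Pi.single i 1)
  have hdiv : grad (fun y => vdiv (f t) y) (z t) i
      = ∑ j, fderiv ℝ (fun q => fderiv ℝ (fun q' => F q' j) q (0, Pi.single j 1)) (t, z t)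
          (0, Pi.single i 1) := by
    have hΨ : ∀ j : Fin d, ContDiff ℝ (⊤ : ℕ∞)
        (fun q => fderiv ℝ (fun q' => F q' j) q (0, Pi.single j 1)) := fun j =>
      ((hFj j).fderiv_right (by simp)).clm_apply contDiff_const
    have hveq : (fun y => vdiv (f t) y)
        = fun y => ∑ j, fderiv ℝ (fun q' => F q' j) (t, y) (0, Pi.single j 1) := by
      funext y
      unfold vdiv
      exact Finset.sum_congr rfl fun j _ =>
        slice_fderiv (fun q => F q j) t y ((hFjd j) (t, y)) (Pi.single j 1)
    show fderiv ℝ (fun y => vdiv (f t) y) (z t) (Pi.single i 1) = _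
    rw [hveq]
    have hsl : fderiv ℝ (fun y =>
        ∑ j, fderiv ℝ (fun q' => F q' j) (t, y) (0, Pi.single j 1)) (z t) (Pi.single i 1)
        = fderiv ℝ (fun q => ∑ j, fderiv ℝ (fun q' => F q' j) q (0, Pi.single j 1)) (t, z t)
            (0, Pi.single i 1) := by
      refine slice_fderiv (fun q => ∑ j, fderiv ℝ (fun q' => F q' j) q (0, Pi.single j 1))
        t (z t) ?_ (Pi.single i 1)
      exact (DifferentiableAt.fun_sum fun j _ => ((hΨ j).differentiable (by simp)).differentiableAt)
    rw [hsl, fderiv_fun_sum fun j _ => ((hΨ j).differentiable (by simp)).differentiableAt]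
    simp [ContinuousLinearMap.sum_apply]
  have hvaleq : (-((jac (f t) (z t))ᵀ.mulVec (grad (fun y => Real.log (ρ t y)) (z t)))
        - grad (fun y => vdiv (f t) y) (z t)) i
      = -(∑ j, fderiv ℝ (fun q => F q j) (t, z t) (0, Pi.single i 1)
            * fderiv ℝ Λ (t, z t) (0, Pi.single j 1))
        - ∑ j, fderiv ℝ (fun q => fderiv ℝ (fun q' => F q' j) q (0, Pi.single j 1)) (t, z t)
            (0, Pi.single i 1) := by
    simp only [Pi.sub_apply, Pi.neg_apply, Matrix.mulVec, dotProduct,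
      Matrix.transpose_apply]
    rw [hdiv]
    congr 2
    exact Finset.sum_congr rfl fun j _ => by rw [hjac j, hgrad t (z t) j]
  show HasDerivAt (fun s => grad (fun y => Real.log (ρ s y)) (z s) i) _ t
  rw [hfun, hvaleq]
  exact hkey
end

section
/- Let ρ be a smooth positive solution of the continuity equation ∂ₜρ + ∇ₓ·(ρ f) = 0 and let z_t solve ∂ₜz_t = f(t,z_t). Then the second-order score H_t := ∇_z² log ρ(t, z_t) satisfies ∂ₜH_t = -∑ᵢ s_{i,t} ∇_z² fᵢ(t,z_t) - ∇_z²(∇_z·f(t,z_t)) - H_t ∇_z f(t,z_t) - (∇_z f(t,z_t))ᵀ H_t, where s_t = ∇_z log ρ(t,z_t) and s_{i,t}, fᵢ are the i-th components. -/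
open MeasureTheory Matrix Real

noncomputable def pd {X : Type*} [NormedAddCommGroup X] [NormedSpace ℝ X]
    (v : X) (F : X → ℝ) : X → ℝ := fun p => fderiv ℝ F p v

section infra
variable {X : Type*} [NormedAddCommGroup X] [NormedSpace ℝ X]

theorem pd_contDiff {F : X → ℝ} (hF : ContDiff ℝ (⊤ : ℕ∞) F) (v : X) :
    ContDiff ℝ (⊤ : ℕ∞) (pd v F) := by
  exact (hF.fderiv_right (le_refl _)).clm_apply contDiff_const

theorem pd_diffAt {F : X → ℝ} (hF : ContDiff ℝ (⊤ : ℕ∞) F) {p : X} :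
    DifferentiableAt ℝ F p :=
  (hF.differentiable (by norm_cast)).differentiableAt

theorem pd_comm {F : X → ℝ} (hF : ContDiff ℝ (⊤ : ℕ∞) F) (v w : X) (p : X) :
    pd v (pd w F) p = pd w (pd v F) p := by
  have hs : IsSymmSndFDerivAt ℝ F p :=
    hF.contDiffAt.isSymmSndFDerivAt (by rw [minSmoothness_of_isRCLikeNormedField]; exact WithTop.coe_le_coe.mpr (le_top : (2:ℕ∞) ≤ ⊤))
  have hd : DifferentiableAt ℝ (fderiv ℝ F) p :=
    ((hF.fderiv_right (m := ((⊤:ℕ∞) : WithTop ℕ∞)) (by norm_cast)).differentiable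
      (by norm_cast)) p
  have e : ∀ u u' : X, pd u (pd u' F) p = fderiv ℝ (fderiv ℝ F) p u u' := by
    intro u u'
    show fderiv ℝ (fun q => (fderiv ℝ F q) u') p u = _
    rw [fderiv_clm_apply hd (differentiableAt_const _)]
    simp
  rw [e, e, hs]

theorem pd_mul {F G : X → ℝ} {p : X} (hF : DifferentiableAt ℝ F p)
    (hG : DifferentiableAt ℝ G p) (v : X) :
    pd v (fun q => F q * G q) p = pd v F p * G p + F p * pd v G p := by
  show fderiv ℝ (fun q => F q * G q) p v = _
  rw [fderiv_fun_mul hF hG]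
  simp [pd, mul_comm]
  ring

theorem pd_sum {ι : Type*} (s : Finset ι) {G : ι → X → ℝ} {p : X}
    (hG : ∀ k ∈ s, DifferentiableAt ℝ (G k) p) (v : X) :
    pd v (fun q => ∑ k ∈ s, G k q) p = ∑ k ∈ s, pd v (G k) p := by
  show fderiv ℝ (fun q => ∑ k ∈ s, G k q) p v = _
  rw [fderiv_fun_sum hG]
  simp [pd]

theorem pd_neg {F : X → ℝ} {p : X} (v : X) :
    pd v (fun q => -F q) p = -pd v F p := by
  show fderiv ℝ (fun q => -F q) p v = _
  rw [fderiv_fun_neg]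
  simp [pd]

theorem pd_add {F G : X → ℝ} {p : X} (hF : DifferentiableAt ℝ F p)
    (hG : DifferentiableAt ℝ G p) (v : X) :
    pd v (fun q => F q + G q) p = pd v F p + pd v G p := by
  show fderiv ℝ (fun q => F q + G q) p v = _
  rw [fderiv_fun_add hF hG]
  simp [pd]

theorem pd_sub {F G : X → ℝ} {p : X} (hF : DifferentiableAt ℝ F p)
    (hG : DifferentiableAt ℝ G p) (v : X) :
    pd v (fun q => F q - G q) p = pd v F p - pd v G p := by
  show fderiv ℝ (fun q => F q - G q) p v = _
  rw [fderiv_fun_sub hF hG]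
  simp [pd]

theorem pd_congr_fun {F G : X → ℝ} (h : ∀ q, F q = G q) (v : X) (p : X) :
    pd v F p = pd v G p := by
  have : F = G := funext h
  rw [this]

end infra

section slice
variable {d : ℕ}

local notation "E" => Fin d → ℝ

/-- slice in space -/
theorem fderiv_slice {F : ℝ × E → ℝ} {s : ℝ} {x : E}
    (hF : DifferentiableAt ℝ F (s, x)) (w : E) :
    fderiv ℝ (fun y => F (s, y)) x w = fderiv ℝ F (s, x) (0, w) := by
  have h1 : HasFDerivAt (fun y : E => (s, y)) (ContinuousLinearMap.inr ℝ ℝ E) x :=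
    (hasFDerivAt_const s x).prodMk (hasFDerivAt_id x)
  have h2 := (hF.hasFDerivAt.comp x h1).fderiv
  rw [show (fun y => F (s, y)) = F ∘ (fun y : E => (s, y)) from rfl, h2]
  rfl

/-- chain rule along a curve -/
theorem hasDerivAt_slice {F : ℝ × E → ℝ} {z : ℝ → E} {t : ℝ} {z' : E}
    (hF : DifferentiableAt ℝ F (t, z t)) (hz : HasDerivAt z z' t) :
    HasDerivAt (fun s => F (s, z s)) (fderiv ℝ F (t, z t) (1, z')) t := by
  have h1 : HasDerivAt (fun s : ℝ => (s, z s)) ((1 : ℝ), z') t :=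
    (hasDerivAt_id t).prodMk hz
  exact hF.hasFDerivAt.comp_hasDerivAt t h1

theorem deriv_time_slice {F : ℝ × E → ℝ} {t : ℝ} {x : E}
    (hF : DifferentiableAt ℝ F (t, x)) :
    deriv (fun s => F (s, x)) t = fderiv ℝ F (t, x) (1, 0) := by
  have := hasDerivAt_slice (z := fun _ => x) (z' := 0) hF (hasDerivAt_const t x)
  exact this.deriv

/-- decomposition of a spatial direction -/
theorem fderiv_decomp {F : ℝ × E → ℝ} {p : ℝ × E} (w : E) :
    fderiv ℝ F p ((1 : ℝ), w)
      = fderiv ℝ F p (1, 0) + ∑ k, w k * fderiv ℝ F p (0, Pi.single k 1) := by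
  have hw : ((0 : ℝ), w) = ∑ k, w k • (((0:ℝ), Pi.single k (1:ℝ)) : ℝ × E) := by
    rw [Prod.ext_iff]
    constructor
    · rw [Prod.fst_sum]; simp
    · rw [Prod.snd_sum]
      simp only [Prod.smul_snd]
      rw [show (fun k : Fin d => w k • (Pi.single k (1:ℝ) : Fin d → ℝ)) = fun k => (Pi.single k (w k) : Fin d → ℝ) by
        funext k; ext l; by_cases h : k = l <;> simp [Pi.single_apply, h]]
      rw [Finset.univ_sum_single]
  have h1 : ((1 : ℝ), w) = ((1:ℝ), (0:E)) + ((0:ℝ), w) := by simp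
  rw [h1, map_add, hw, map_sum]
  simp only [_root_.map_smul, smul_eq_mul]
end slice

section score

variable {d : ℕ}

/-- time direction -/
def e0 (d : ℕ) : ℝ × (Fin d → ℝ) := (1, 0)

/-- k-th spatial direction -/
noncomputable def ee (d : ℕ) (k : Fin d) : ℝ × (Fin d → ℝ) := ((0:ℝ), Pi.single k 1)

noncomputable def RR (ρ : ℝ → (Fin d → ℝ) → ℝ) : ℝ × (Fin d → ℝ) → ℝ :=
  fun p => ρ p.1 p.2

noncomputable def PP (ρ : ℝ → (Fin d → ℝ) → ℝ) : ℝ × (Fin d → ℝ) → ℝ :=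
  fun p => Real.log (ρ p.1 p.2)

def FF (f : ℝ → (Fin d → ℝ) → (Fin d → ℝ)) (k : Fin d) : ℝ × (Fin d → ℝ) → ℝ :=
  fun p => f p.1 p.2 k

theorem key (P : ℝ × (Fin d → ℝ) → ℝ) (Fk : Fin d → ℝ × (Fin d → ℝ) → ℝ)
    (hP : ContDiff ℝ (⊤:ℕ∞) P) (hFk : ∀ k, ContDiff ℝ (⊤:ℕ∞) (Fk k))
    (hE0 : ∀ q, pd (e0 d) P q
      = -(∑ k, pd (ee d k) P q * Fk k q) - ∑ k, pd (ee d k) (Fk k) q)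
    (i j : Fin d) (p : ℝ × (Fin d → ℝ)) :
    pd (e0 d) (pd (ee d j) (pd (ee d i) P)) p
      + ∑ k, Fk k p * pd (ee d k) (pd (ee d j) (pd (ee d i) P)) p
    = -(∑ k, pd (ee d k) P p * pd (ee d j) (pd (ee d i) (Fk k)) p)
      - ∑ k, pd (ee d j) (pd (ee d i) (pd (ee d k) (Fk k))) p
      - ∑ k, pd (ee d k) (pd (ee d i) P) p * pd (ee d j) (Fk k) p
      - ∑ k, pd (ee d i) (Fk k) p * pd (ee d j) (pd (ee d k) P) p := by
  have hP1 : ∀ v, ContDiff ℝ (⊤:ℕ∞) (pd v P) := fun v => pd_contDiff hP v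
  have hP2 : ∀ v w, ContDiff ℝ (⊤:ℕ∞) (pd v (pd w P)) := fun v w => pd_contDiff (hP1 w) v
  have hF1 : ∀ k v, ContDiff ℝ (⊤:ℕ∞) (pd v (Fk k)) := fun k v => pd_contDiff (hFk k) v
  have hF2 : ∀ k v w, ContDiff ℝ (⊤:ℕ∞) (pd v (pd w (Fk k))) :=
    fun k v w => pd_contDiff (hF1 k w) v
  -- Step C : first expansion (pointwise)
  have hC : ∀ q, pd (ee d i) (pd (e0 d) P) q
      = -(∑ k, (pd (ee d i) (pd (ee d k) P) q * Fk k q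
          + pd (ee d k) P q * pd (ee d i) (Fk k) q))
        - ∑ k, pd (ee d i) (pd (ee d k) (Fk k)) q := by
    intro q
    rw [pd_congr_fun hE0 (ee d i) q]
    rw [pd_sub (by exact (DifferentiableAt.fun_sum (fun k _ =>
          (pd_diffAt (hP1 (ee d k))).mul (pd_diffAt (hFk k)))).neg)
        (DifferentiableAt.fun_sum (fun k _ => pd_diffAt (hF1 k (ee d k)))) (ee d i)]
    rw [pd_neg, pd_sum (G := fun k q => pd (ee d k) P q * Fk k q) Finset.univ (fun k _ =>
          (pd_diffAt (hP1 (ee d k))).mul (pd_diffAt (hFk k))),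
        pd_sum Finset.univ (fun k _ => pd_diffAt (hF1 k (ee d k)))]
    congr 2
    apply Finset.sum_congr rfl
    intro k _
    exact pd_mul (pd_diffAt (hP1 (ee d k))) (pd_diffAt (hFk k)) (ee d i)
  -- Step D : second expansion at p
  have hD : pd (ee d j) (pd (ee d i) (pd (e0 d) P)) p
      = -(∑ k, (pd (ee d j) (pd (ee d i) (pd (ee d k) P)) p * Fk k p
          + pd (ee d i) (pd (ee d k) P) p * pd (ee d j) (Fk k) p
          + (pd (ee d j) (pd (ee d k) P) p * pd (ee d i) (Fk k) p
            + pd (ee d k) P p * pd (ee d j) (pd (ee d i) (Fk k)) p)))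
        - ∑ k, pd (ee d j) (pd (ee d i) (pd (ee d k) (Fk k))) p := by
    rw [pd_congr_fun hC (ee d j) p]
    rw [pd_sub (by exact (DifferentiableAt.fun_sum (fun k _ =>
          ((pd_diffAt (hP2 (ee d i) (ee d k))).mul (pd_diffAt (hFk k))).add
            ((pd_diffAt (hP1 (ee d k))).mul (pd_diffAt (hF1 k (ee d i)))))).neg)
        (DifferentiableAt.fun_sum (fun k _ => pd_diffAt (hF2 k (ee d i) (ee d k)))) (ee d j)]
    rw [pd_neg, pd_sum (G := fun k q => pd (ee d i) (pd (ee d k) P) q * Fk k q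
            + pd (ee d k) P q * pd (ee d i) (Fk k) q) Finset.univ (fun k _ =>
          ((pd_diffAt (hP2 (ee d i) (ee d k))).mul (pd_diffAt (hFk k))).add
            ((pd_diffAt (hP1 (ee d k))).mul (pd_diffAt (hF1 k (ee d i))))),
        pd_sum Finset.univ (fun k _ => pd_diffAt (hF2 k (ee d i) (ee d k)))]
    congr 2
    apply Finset.sum_congr rfl
    intro k _
    rw [pd_add (F := fun q => pd (ee d i) (pd (ee d k) P) q * Fk k q)
        (G := fun q => pd (ee d k) P q * pd (ee d i) (Fk k) q) ((pd_diffAt (hP2 (ee d i) (ee d k))).mul (pd_diffAt (hFk k)))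
        ((pd_diffAt (hP1 (ee d k))).mul (pd_diffAt (hF1 k (ee d i)))) (ee d j)]
    rw [pd_mul (pd_diffAt (hP2 (ee d i) (ee d k))) (pd_diffAt (hFk k)) (ee d j)]
    rw [pd_mul (pd_diffAt (hP1 (ee d k))) (pd_diffAt (hF1 k (ee d i))) (ee d j)]
  -- Step A/B : commute time derivative inside
  have hAB : pd (e0 d) (pd (ee d j) (pd (ee d i) P)) p
      = pd (ee d j) (pd (ee d i) (pd (e0 d) P)) p := by
    rw [pd_comm (hP1 (ee d i)) (e0 d) (ee d j) p]
    exact pd_congr_fun (fun q => pd_comm hP (e0 d) (ee d i) q) (ee d j) p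
  -- Step E : third-derivative transport term
  have hE : ∀ k, pd (ee d k) (pd (ee d j) (pd (ee d i) P)) p
      = pd (ee d j) (pd (ee d i) (pd (ee d k) P)) p := by
    intro k
    rw [pd_comm (hP1 (ee d i)) (ee d k) (ee d j) p]
    exact pd_congr_fun (fun q => pd_comm hP (ee d k) (ee d i) q) (ee d j) p
  rw [hAB, hD]
  rw [Finset.sum_congr rfl (fun k _ => by rw [hE k]; ring :
    ∀ k ∈ Finset.univ, Fk k p * pd (ee d k) (pd (ee d j) (pd (ee d i) P)) p
      = pd (ee d j) (pd (ee d i) (pd (ee d k) P)) p * Fk k p)]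
  have h3 : ∑ k, pd (ee d i) (pd (ee d k) P) p * pd (ee d j) (Fk k) p
      = ∑ k, pd (ee d k) (pd (ee d i) P) p * pd (ee d j) (Fk k) p :=
    Finset.sum_congr rfl (fun k _ => by rw [pd_comm hP (ee d i) (ee d k) p])
  have h4 : ∑ k, pd (ee d j) (pd (ee d k) P) p * pd (ee d i) (Fk k) p
      = ∑ k, pd (ee d i) (Fk k) p * pd (ee d j) (pd (ee d k) P) p :=
    Finset.sum_congr rfl (fun k _ => mul_comm _ _)
  simp only [Finset.sum_add_distrib] at *
  rw [← h3, ← h4]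
  ring

noncomputable def VV (f : ℝ → (Fin d → ℝ) → (Fin d → ℝ)) : ℝ × (Fin d → ℝ) → ℝ :=
  fun p => ∑ k, pd (ee d k) (FF f k) p

theorem grad_slice (G : ℝ × (Fin d → ℝ) → ℝ) (hG : ContDiff ℝ (⊤:ℕ∞) G)
    (s : ℝ) (x : Fin d → ℝ) (k : Fin d) :
    grad (fun y => G (s, y)) x k = pd (ee d k) G (s, x) := by
  show fderiv ℝ (fun y => G (s, y)) x (Pi.single k 1) = _
  rw [fderiv_slice (pd_diffAt hG)]
  rfl

theorem hess_slice (G : ℝ × (Fin d → ℝ) → ℝ) (hG : ContDiff ℝ (⊤:ℕ∞) G)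
    (s : ℝ) (x : Fin d → ℝ) (i j : Fin d) :
    hess (fun y => G (s, y)) x i j = pd (ee d j) (pd (ee d i) G) (s, x) := by
  show fderiv ℝ (fun y => grad (fun y' => G (s, y')) y i) x (Pi.single j 1) = _
  have h1 : (fun y => grad (fun y' => G (s, y')) y i) = fun y => pd (ee d i) G (s, y) :=
    funext fun y => grad_slice G hG s y i
  rw [h1, fderiv_slice (pd_diffAt (pd_contDiff hG (ee d i)))]
  rfl

/-- the second-order score `H_t = ∇_z² log ρ(t, z_t)` satisfies
`∂ₜ H_t = -∑ᵢ s_{i,t} ∇_z² fᵢ - ∇_z²(∇_z·f) - H_t ∇_z f - (∇_z f)ᵀ H_t`. -/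
theorem second_order_score_dynamics {d : ℕ}
    (f : ℝ → (Fin d → ℝ) → (Fin d → ℝ))
    (ρ : ℝ → (Fin d → ℝ) → ℝ)
    (z : ℝ → (Fin d → ℝ))
    (hf : ContDiff ℝ (⊤ : ℕ∞) (fun p : ℝ × (Fin d → ℝ) => f p.1 p.2))
    (hρ : ContDiff ℝ (⊤ : ℕ∞) (fun p : ℝ × (Fin d → ℝ) => ρ p.1 p.2))
    (hρpos : ∀ t x, 0 < ρ t x)
    (hcont : ∀ t x, pt ρ t x + vdiv (fun y => ρ t y • f t y) x = 0)
    (hz : ∀ t, HasDerivAt z (f t (z t)) t) :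
    ∀ t i j, HasDerivAt (fun s => hess (fun y => Real.log (ρ s y)) (z s) i j)
      (-(∑ k, grad (fun y => Real.log (ρ t y)) (z t) k * hess (fun y => f t y k) (z t) i j)
        - hess (fun y => vdiv (f t) y) (z t) i j
        - (hess (fun y => Real.log (ρ t y)) (z t) * jac (f t) (z t)) i j
        - ((jac (f t) (z t))ᵀ * hess (fun y => Real.log (ρ t y)) (z t)) i j) t := by
  intro t i j
  -- smoothness
  have hRR : ContDiff ℝ (⊤:ℕ∞) (RR ρ) := hρ.of_le (by simp)
  have hFF : ∀ k, ContDiff ℝ (⊤:ℕ∞) (FF f k) :=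
    fun k => (contDiff_pi.1 hf k).of_le (by simp)
  have hPP : ContDiff ℝ (⊤:ℕ∞) (PP ρ) :=
    hRR.log (fun q => ne_of_gt (hρpos q.1 q.2))
  have hVV : ContDiff ℝ (⊤:ℕ∞) (VV f) :=
    ContDiff.sum (fun k _ => pd_contDiff (hFF k) (ee d k))
  -- log-derivative relation
  have hPR : ∀ (v : ℝ × (Fin d → ℝ)) q, pd v (PP ρ) q = (RR ρ q)⁻¹ * pd v (RR ρ) q := by
    intro v q
    have h : HasFDerivAt (PP ρ) ((RR ρ q)⁻¹ • fderiv ℝ (RR ρ) q) q :=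
      (pd_diffAt hRR (p := q)).hasFDerivAt.log (ne_of_gt (hρpos q.1 q.2))
    show fderiv ℝ (PP ρ) q v = _
    rw [h.fderiv]
    rfl
  -- continuity equation in pd form
  have hE0 : ∀ q, pd (e0 d) (PP ρ) q
      = -(∑ k, pd (ee d k) (PP ρ) q * FF f k q) - ∑ k, pd (ee d k) (FF f k) q := by
    rintro ⟨a, b⟩
    have hc := hcont a b
    have h1 : pt ρ a b = pd (e0 d) (RR ρ) (a, b) :=
      deriv_time_slice (pd_diffAt hRR)
    have h2 : vdiv (fun y => ρ a y • f a y) b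
        = ∑ k, (pd (ee d k) (RR ρ) (a, b) * FF f k (a, b)
          + RR ρ (a, b) * pd (ee d k) (FF f k) (a, b)) := by
      show (∑ k, fderiv ℝ (fun y => (ρ a y • f a y) k) b (Pi.single k 1)) = _
      refine Finset.sum_congr rfl (fun k _ => ?_)
      exact (fderiv_slice (F := fun p => RR ρ p * FF f k p)
          ((pd_diffAt hRR).mul (pd_diffAt (hFF k))) (Pi.single k 1)).trans
        (pd_mul (pd_diffAt hRR) (pd_diffAt (hFF k)) (ee d k))
    rw [h1, h2] at hc
    have hr : RR ρ (a, b) ≠ 0 := ne_of_gt (hρpos a b)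
    have hkey : pd (e0 d) (RR ρ) (a, b)
        = -∑ k, (pd (ee d k) (RR ρ) (a, b) * FF f k (a, b)
          + RR ρ (a, b) * pd (ee d k) (FF f k) (a, b)) :=
      eq_neg_of_add_eq_zero_left hc
    rw [hPR (e0 d) (a, b), hkey, mul_neg, Finset.mul_sum]
    rw [Finset.sum_congr rfl (fun k _ => by
        rw [mul_add, ← mul_assoc, ← hPR (ee d k) (a, b), ← mul_assoc,
          inv_mul_cancel₀ hr, one_mul] :
      ∀ k ∈ Finset.univ, (RR ρ (a, b))⁻¹ * (pd (ee d k) (RR ρ) (a, b) * FF f k (a, b)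
          + RR ρ (a, b) * pd (ee d k) (FF f k) (a, b))
        = pd (ee d k) (PP ρ) (a, b) * FF f k (a, b) + pd (ee d k) (FF f k) (a, b))]
    rw [Finset.sum_add_distrib, neg_add, ← sub_eq_add_neg]
  -- the function being differentiated
  have hQ : ContDiff ℝ (⊤:ℕ∞) (pd (ee d j) (pd (ee d i) (PP ρ))) :=
    pd_contDiff (pd_contDiff hPP (ee d i)) (ee d j)
  have hfun : (fun s => hess (fun y => Real.log (ρ s y)) (z s) i j)
      = fun s => pd (ee d j) (pd (ee d i) (PP ρ)) (s, z s) :=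
    funext fun s => hess_slice (PP ρ) hPP s (z s) i j
  have hchain : HasDerivAt (fun s => pd (ee d j) (pd (ee d i) (PP ρ)) (s, z s))
      (fderiv ℝ (pd (ee d j) (pd (ee d i) (PP ρ))) (t, z t) (1, f t (z t))) t :=
    hasDerivAt_slice (pd_diffAt hQ) (hz t)
  rw [hfun]
  -- value translation
  have hval : (-(∑ k, grad (fun y => Real.log (ρ t y)) (z t) k * hess (fun y => f t y k) (z t) i j)
        - hess (fun y => vdiv (f t) y) (z t) i j
        - (hess (fun y => Real.log (ρ t y)) (z t) * jac (f t) (z t)) i j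
        - ((jac (f t) (z t))ᵀ * hess (fun y => Real.log (ρ t y)) (z t)) i j)
      = fderiv ℝ (pd (ee d j) (pd (ee d i) (PP ρ))) (t, z t) (1, f t (z t)) := by
    -- translate each piece into pd form
    have e1 : ∀ k, grad (fun y => Real.log (ρ t y)) (z t) k = pd (ee d k) (PP ρ) (t, z t) :=
      fun k => grad_slice (PP ρ) hPP t (z t) k
    have e2 : ∀ k, hess (fun y => f t y k) (z t) i j
        = pd (ee d j) (pd (ee d i) (FF f k)) (t, z t) :=
      fun k => hess_slice (FF f k) (hFF k) t (z t) i j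
    have e3 : hess (fun y => vdiv (f t) y) (z t) i j
        = ∑ k, pd (ee d j) (pd (ee d i) (pd (ee d k) (FF f k))) (t, z t) := by
      have hv : (fun y => vdiv (f t) y) = fun y => VV f (t, y) := by
        funext y
        show (∑ k, fderiv ℝ (fun y' => f t y' k) y (Pi.single k 1)) = _
        refine Finset.sum_congr rfl (fun k _ => ?_)
        exact fderiv_slice (F := FF f k) (pd_diffAt (hFF k)) (Pi.single k 1)
      rw [hv, hess_slice (VV f) hVV t (z t) i j]
      have hVi : ∀ q, pd (ee d i) (VV f) q
          = ∑ k, pd (ee d i) (pd (ee d k) (FF f k)) q := by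
        intro q
        exact pd_sum Finset.univ
          (fun k _ => pd_diffAt (pd_contDiff (hFF k) (ee d k))) (ee d i)
      rw [pd_congr_fun hVi (ee d j) (t, z t)]
      exact pd_sum Finset.univ
        (fun k _ => pd_diffAt (pd_contDiff (pd_contDiff (hFF k) (ee d k)) (ee d i))) (ee d j)
    have e4 : (hess (fun y => Real.log (ρ t y)) (z t) * jac (f t) (z t)) i j
        = ∑ k, pd (ee d k) (pd (ee d i) (PP ρ)) (t, z t) * pd (ee d j) (FF f k) (t, z t) := by
      rw [Matrix.mul_apply]
      refine Finset.sum_congr rfl (fun k _ => ?_)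
      have ha : hess (fun y => Real.log (ρ t y)) (z t) i k
          = pd (ee d k) (pd (ee d i) (PP ρ)) (t, z t) := hess_slice (PP ρ) hPP t (z t) i k
      have hb : jac (f t) (z t) k j = pd (ee d j) (FF f k) (t, z t) := by
        show fderiv ℝ (fun y => f t y k) (z t) (Pi.single j 1) = _
        exact fderiv_slice (F := FF f k) (pd_diffAt (hFF k)) (Pi.single j 1)
      rw [ha, hb]
    have e5 : ((jac (f t) (z t))ᵀ * hess (fun y => Real.log (ρ t y)) (z t)) i j
        = ∑ k, pd (ee d i) (FF f k) (t, z t) * pd (ee d j) (pd (ee d k) (PP ρ)) (t, z t) := by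
      rw [Matrix.mul_apply]
      refine Finset.sum_congr rfl (fun k _ => ?_)
      rw [Matrix.transpose_apply]
      have ha : jac (f t) (z t) k i = pd (ee d i) (FF f k) (t, z t) := by
        show fderiv ℝ (fun y => f t y k) (z t) (Pi.single i 1) = _
        exact fderiv_slice (F := FF f k) (pd_diffAt (hFF k)) (Pi.single i 1)
      have hb : hess (fun y => Real.log (ρ t y)) (z t) k j
          = pd (ee d j) (pd (ee d k) (PP ρ)) (t, z t) := hess_slice (PP ρ) hPP t (z t) k j
      rw [ha, hb]
    rw [Finset.sum_congr rfl (fun k _ => by rw [e1 k, e2 k] :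
      ∀ k ∈ Finset.univ, grad (fun y => Real.log (ρ t y)) (z t) k
          * hess (fun y => f t y k) (z t) i j
        = pd (ee d k) (PP ρ) (t, z t) * pd (ee d j) (pd (ee d i) (FF f k)) (t, z t)),
      e3, e4, e5]
    rw [← key (PP ρ) (FF f) hPP hFF hE0 i j (t, z t)]
    exact (fderiv_decomp (f t (z t))).symm
  rw [hval]
  exact hchain

end score
end

section
/- Let A : ℝ≥0 → ℝ^{d×d} be continuous and Σ : ℝ≥0 → ℝ^{d×d} solve the matrix ODE ∂ₜΣ(t) = A(t)Σ(t) + Σ(t)A(t)ᵀ with Σ(0) symmetric positive definite. Then the centered Gaussian density ρ(t,x) = (2π)^{-d/2} det(Σ(t))^{-1/2} exp(-½ xᵀΣ(t)⁻¹x) satisfies the transport equation ∂ₜρ(t,x) + ∇ₓ·(A(t)x · ρ(t,x)) = 0. -/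
open MeasureTheory Matrix Real

/-!
Write `q_Σ(x) = xᵀ Σ⁻¹ x`. Jacobi's formula and the Lyapunov equation give
`∂ₜ det Σ = 2 tr A · det Σ` and `∂ₜ Σ⁻¹ = -Σ⁻¹ Σ' Σ⁻¹ = -(Σ⁻¹ A + Aᵀ Σ⁻¹)`, so `∂ₜ q_Σ(x)` is minus the
derivative of `q_Σ` at `x` in the direction `A x`. Hence `∂ₜ ρ = ρ (-tr A - ½ ∂ₜ q_Σ(x))`, while the
product rule gives `∇ₓ·(ρ A x) = ρ tr A + ∇ρ · A x = ρ (tr A - ½ D q_Σ(x) (A x))`, and the two cancel.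
-/

noncomputable def centeredGaussianDensity {d : ℕ} (S : Matrix (Fin d) (Fin d) ℝ) (x : Fin d → ℝ) :
    ℝ :=
  (2 * π) ^ (-(d : ℝ) / 2) * S.det ^ (-(1 : ℝ) / 2) * exp (-(1 / 2) * (x ⬝ᵥ S⁻¹ *ᵥ x))

section Algebra

variable {n R : Type*} [Fintype n] [DecidableEq n] [CommRing R]

theorem sum_det_updateRow_eq_trace_adjugate_mul (A B : Matrix n n R) :
    ∑ i, (A.updateRow i (B i)).det = (adjugate A * B).trace := by
  simp only [← cramer_transpose_apply, cramer_eq_adjugate_mulVec, ← adjugate_transpose, trace,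
    diag, mul_apply, mulVec, dotProduct, transpose_apply]
  rw [Finset.sum_comm]

theorem trace_adjugate_mul_lyapunov (S A : Matrix n n R) :
    (adjugate S * (A * S + S * Aᵀ)).trace = 2 * A.trace * S.det := by
  rw [mul_add, trace_add, ← mul_assoc, trace_mul_cycle, mul_adjugate, ← mul_assoc,
    adjugate_mul, smul_mul, smul_mul, one_mul, one_mul, trace_smul, trace_smul, trace_transpose,
    smul_eq_mul]
  ring

theorem dotProduct_inv_mul_lyapunov_mul_inv_mulVec {S : Matrix n n R} (hS : IsUnit S.det)
    (A : Matrix n n R) (x : n → R) :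
    x ⬝ᵥ (S⁻¹ * (A * S + S * Aᵀ) * S⁻¹) *ᵥ x =
      x ⬝ᵥ S⁻¹ *ᵥ (A *ᵥ x) + (A *ᵥ x) ⬝ᵥ S⁻¹ *ᵥ x := by
  rw [mul_add, add_mul, ← mul_assoc, mul_assoc _ S, mul_nonsing_inv _ hS, mul_one, ← mul_assoc,
    nonsing_inv_mul _ hS, one_mul, add_mulVec, dotProduct_add, ← mulVec_mulVec, ← mulVec_mulVec,
    dotProduct_mulVec x Aᵀ, vecMul_transpose]

end Algebra

section Calculus

variable {n : Type*} [Fintype n] {M : ℝ → Matrix n n ℝ} {M' : Matrix n n ℝ} {t : ℝ}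

theorem hasDerivAt_det_of_entries [DecidableEq n]
    (hM : ∀ i j, HasDerivAt (fun s => M s i j) (M' i j) t) :
    HasDerivAt (fun s => (M s).det) (adjugate (M t) * M').trace t := by
  let D : (n → ℝ) [⋀^n]→L[ℝ] ℝ := { detRowAlternating with cont := continuous_id.matrix_det }
  have hM' : HasDerivAt (F := n → n → ℝ) (fun s => M s) M' t :=
    hasDerivAt_pi.2 fun i => hasDerivAt_pi.2 fun j => hM i j
  rw [← sum_det_updateRow_eq_trace_adjugate_mul]
  exact ((D.hasFDerivAt (M t)).comp_hasDerivAt t hM').congr_deriv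
    (ContinuousMultilinearMap.linearDeriv_apply _ _ _)

-- The operator norm makes matrices a complete normed algebra, in which inversion is differentiable.
open scoped Matrix.Norms.Operator in
theorem hasDerivAt_matrix_of_entries [DecidableEq n]
    (hM : ∀ i j, HasDerivAt (fun s => M s i j) (M' i j) t) : HasDerivAt M M' t := by
  have hsum (N : Matrix n n ℝ) : N = ∑ i, ∑ j, N i j • single i j (1 : ℝ) := by
    simpa only [smul_single, smul_eq_mul, mul_one] using matrix_eq_sum_single N
  rw [funext fun s => hsum (M s), hsum M']
  exact HasDerivAt.fun_sum fun i _ => HasDerivAt.fun_sum fun j _ => (hM i j).smul_const _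

open scoped Matrix.Norms.Operator in
theorem hasDerivAt_inv_apply_of_entries [DecidableEq n]
    (hM : ∀ i j, HasDerivAt (fun s => M s i j) (M' i j) t) (ht : IsUnit (M t)) (i j : n) :
    HasDerivAt (fun s => (M s)⁻¹ i j) (-((M t)⁻¹ * M' * (M t)⁻¹) i j) t := by
  obtain ⟨u, hu⟩ := ht
  have hinv := (hasFDerivAt_ringInverse (𝕜 := ℝ) u).comp_hasDerivAt_of_eq t
    (hasDerivAt_matrix_of_entries hM) hu
  have := ((entryLinearMap ℝ ℝ i j).toContinuousLinearMap.hasFDerivAt).comp_hasDerivAt t hinv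
  simp only [nonsing_inv_eq_ringInverse, ← hu, Ring.inverse_unit]
  exact this

theorem hasDerivAt_dotProduct_mulVec_of_entries
    (hM : ∀ i j, HasDerivAt (fun s => M s i j) (M' i j) t) (x : n → ℝ) :
    HasDerivAt (fun s => x ⬝ᵥ M s *ᵥ x) (x ⬝ᵥ M' *ᵥ x) t :=
  HasDerivAt.fun_sum fun i _ =>
    (HasDerivAt.fun_sum fun j _ => (hM i j).mul_const (x j)).const_mul (x i)

theorem hasFDerivAt_dotProduct_mulVec [DecidableEq n] (N : Matrix n n ℝ) (x : n → ℝ) :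
    HasFDerivAt (fun y => y ⬝ᵥ N *ᵥ y)
      ((toLinearMap₂' ℝ N).toContinuousBilinearMap x +
        (toLinearMap₂' ℝ N).toContinuousBilinearMap.flip x) x := by
  have := (toLinearMap₂' ℝ N).toContinuousBilinearMap.hasFDerivAt_of_bilinear
    (hasFDerivAt_id x) (hasFDerivAt_id x)
  simp only [id, toLinearMap₂'_apply', LinearMap.toContinuousBilinearMap_apply] at this
  exact this.congr_fderiv (by ext; simp)

end Calculus

section Divergence

variable {d : ℕ} {x : Fin d → ℝ}

theorem vdiv_eq_trace {F : (Fin d → ℝ) → (Fin d → ℝ)} {F' : (Fin d → ℝ) →L[ℝ] (Fin d → ℝ)}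
    (hF : HasFDerivAt F F' x) :
    vdiv F x = LinearMap.trace ℝ _ (F' : (Fin d → ℝ) →ₗ[ℝ] (Fin d → ℝ)) := by
  rw [LinearMap.trace_eq_matrix_trace ℝ (Pi.basisFun ℝ (Fin d)), LinearMap.toMatrix_eq_toMatrix',
    vdiv]
  refine Finset.sum_congr rfl fun i _ => ?_
  rw [(hasFDerivAt_pi'.1 hF i).fderiv]
  simp [LinearMap.toMatrix'_apply]

theorem vdiv_smul {g : (Fin d → ℝ) → ℝ} {g' : (Fin d → ℝ) →L[ℝ] ℝ}
    {F : (Fin d → ℝ) → (Fin d → ℝ)} {F' : (Fin d → ℝ) →L[ℝ] (Fin d → ℝ)}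
    (hg : HasFDerivAt g g' x) (hF : HasFDerivAt F F' x) :
    vdiv (fun y => g y • F y) x = g x * vdiv F x + g' (F x) := by
  rw [vdiv_eq_trace (hg.fun_smul hF), vdiv_eq_trace hF]
  simp [LinearMap.trace_smulRight]

theorem vdiv_mulVec (A : Matrix (Fin d) (Fin d) ℝ) : vdiv (A *ᵥ ·) x = A.trace := by
  rw [vdiv_eq_trace (F := (A *ᵥ ·)) (LinearMap.toContinuousLinearMap (toLin' A)).hasFDerivAt]
  simp

end Divergence

section CenteredGaussian

variable {d : ℕ}

theorem hasDerivAt_det_of_lyapunov {S : ℝ → Matrix (Fin d) (Fin d) ℝ}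
    {A : Matrix (Fin d) (Fin d) ℝ} {t : ℝ}
    (hS : ∀ i j, HasDerivAt (fun s => S s i j) ((A * S t + S t * Aᵀ) i j) t) :
    HasDerivAt (fun s => (S s).det) (2 * A.trace * (S t).det) t := by
  simpa only [trace_adjugate_mul_lyapunov] using hasDerivAt_det_of_entries hS

theorem hasDerivAt_dotProduct_inv_mulVec_of_lyapunov {S : ℝ → Matrix (Fin d) (Fin d) ℝ}
    {A : Matrix (Fin d) (Fin d) ℝ} {t : ℝ}
    (hS : ∀ i j, HasDerivAt (fun s => S s i j) ((A * S t + S t * Aᵀ) i j) t)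
    (hdet : (S t).det ≠ 0) (x : Fin d → ℝ) :
    HasDerivAt (fun s => x ⬝ᵥ (S s)⁻¹ *ᵥ x)
      (-(x ⬝ᵥ (S t)⁻¹ *ᵥ (A *ᵥ x) + (A *ᵥ x) ⬝ᵥ (S t)⁻¹ *ᵥ x)) t := by
  have hinv := hasDerivAt_inv_apply_of_entries hS ((isUnit_iff_isUnit_det _).2 hdet.isUnit)
  have := hasDerivAt_dotProduct_mulVec_of_entries
    (M' := -((S t)⁻¹ * (A * S t + S t * Aᵀ) * (S t)⁻¹)) hinv x
  rwa [neg_mulVec, dotProduct_neg, dotProduct_inv_mul_lyapunov_mul_inv_mulVec hdet.isUnit] at this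

theorem hasDerivAt_centeredGaussianDensity_of_lyapunov {S : ℝ → Matrix (Fin d) (Fin d) ℝ}
    {A : Matrix (Fin d) (Fin d) ℝ} {t : ℝ}
    (hS : ∀ i j, HasDerivAt (fun s => S s i j) ((A * S t + S t * Aᵀ) i j) t)
    (hdet : (S t).det ≠ 0) (x : Fin d → ℝ) :
    HasDerivAt (fun s => centeredGaussianDensity (S s) x)
      (centeredGaussianDensity (S t) x *
        (-A.trace + 1 / 2 * (x ⬝ᵥ (S t)⁻¹ *ᵥ (A *ᵥ x) + (A *ᵥ x) ⬝ᵥ (S t)⁻¹ *ᵥ x))) t := by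
  have hpow := (hasDerivAt_det_of_lyapunov hS).rpow_const (p := -(1 : ℝ) / 2) (Or.inl hdet)
  have hexp := ((hasDerivAt_dotProduct_inv_mulVec_of_lyapunov hS hdet x).const_mul
    (-(1 / 2 : ℝ))).exp
  have := (hpow.fun_mul hexp).const_mul ((2 * π) ^ (-(d : ℝ) / 2))
  refine (this.congr_deriv ?_).congr_of_eventuallyEq
    (Filter.Eventually.of_forall fun s => by simp only [centeredGaussianDensity, mul_assoc])
  have hdet_rpow : (S t).det ^ (-(1 : ℝ) / 2 - 1) * (S t).det = (S t).det ^ (-(1 : ℝ) / 2) := by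
    rw [← rpow_add_one hdet]; norm_num
  rw [centeredGaussianDensity, ← hdet_rpow]
  ring

theorem hasFDerivAt_centeredGaussianDensity (S : Matrix (Fin d) (Fin d) ℝ) (x : Fin d → ℝ) :
    HasFDerivAt (centeredGaussianDensity S)
      ((-(1 / 2) * centeredGaussianDensity S x) •
        ((toLinearMap₂' ℝ S⁻¹).toContinuousBilinearMap x +
          (toLinearMap₂' ℝ S⁻¹).toContinuousBilinearMap.flip x)) x := by
  have := (((hasFDerivAt_dotProduct_mulVec S⁻¹ x).const_mul (-(1 / 2))).exp).const_mul
    ((2 * π) ^ (-(d : ℝ) / 2) * S.det ^ (-(1 : ℝ) / 2))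
  refine this.congr_fderiv ?_
  rw [smul_smul, smul_smul, centeredGaussianDensity]
  ring_nf

theorem vdiv_centeredGaussianDensity_smul_mulVec (S A : Matrix (Fin d) (Fin d) ℝ)
    (x : Fin d → ℝ) :
    vdiv (fun y => centeredGaussianDensity S y • A *ᵥ y) x =
      centeredGaussianDensity S x *
        (A.trace - 1 / 2 * (x ⬝ᵥ S⁻¹ *ᵥ (A *ᵥ x) + (A *ᵥ x) ⬝ᵥ S⁻¹ *ᵥ x)) := by
  rw [vdiv_smul (F := (A *ᵥ ·)) (hasFDerivAt_centeredGaussianDensity S x)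
    (LinearMap.toContinuousLinearMap (toLin' A)).hasFDerivAt, vdiv_mulVec]
  simp only [_root_.add_apply, _root_.smul_apply, ContinuousLinearMap.flip_apply,
    LinearMap.toContinuousBilinearMap_apply, toLinearMap₂'_apply', mulVec_mulVec, smul_eq_mul]
  ring

end CenteredGaussian

theorem gaussian_transport_equation_general {d : ℕ}
    (A S : ℝ → Matrix (Fin d) (Fin d) ℝ)
    (ρ : ℝ → (Fin d → ℝ) → ℝ)
    (hODE : ∀ t i j, HasDerivAt (fun τ => S τ i j) ((A t * S t + S t * (A t)ᵀ) i j) t)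
    (hSpos : ∀ t, 0 ≤ t → (S t).PosDef)
    (hρ : ∀ t x, ρ t x = (2 * Real.pi) ^ (-(d : ℝ) / 2) * (S t).det ^ (-(1 : ℝ) / 2)
        * Real.exp (-(1 / 2) * (x ⬝ᵥ (S t)⁻¹.mulVec x))) :
    ∀ t, 0 ≤ t → ∀ x, pt ρ t x + vdiv (fun y => ρ t y • (A t).mulVec y) x = 0 := by
  obtain rfl : ρ = fun t => centeredGaussianDensity (S t) := funext fun t => funext (hρ t)
  intro t ht x
  have hdet : (S t).det ≠ 0 := (hSpos t ht).det_pos.ne'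
  rw [pt, (hasDerivAt_centeredGaussianDensity_of_lyapunov (hODE t) hdet x).deriv,
    vdiv_centeredGaussianDensity_smul_mulVec]
  ring

/-- if `Σ` solves the Lyapunov ODE `Σ' = AΣ + ΣAᵀ` with `Σ(0) ≻ 0`,
then the centered Gaussian density with covariance `Σ(t)` satisfies the transport
equation with the linear vector field `f(t,x) = A(t)x`. -/
theorem gaussian_transport_equation {d : ℕ}
    (A S : ℝ → Matrix (Fin d) (Fin d) ℝ)
    (ρ : ℝ → (Fin d → ℝ) → ℝ)
    (hA : ∀ i j, Continuous fun t => A t i j)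
    (hODE : ∀ t i j, HasDerivAt (fun τ => S τ i j) ((A t * S t + S t * (A t)ᵀ) i j) t)
    (hS0 : (S 0).PosDef)
    (hSpos : ∀ t, 0 ≤ t → (S t).PosDef)
    (hρ : ∀ t x, ρ t x = (2 * Real.pi) ^ (-(d : ℝ) / 2) * (S t).det ^ (-(1 : ℝ) / 2)
        * Real.exp (-(1 / 2) * (x ⬝ᵥ (S t)⁻¹.mulVec x))) :
    ∀ t, 0 ≤ t → ∀ x, pt ρ t x + vdiv (fun y => ρ t y • (A t).mulVec y) x = 0 :=
  gaussian_transport_equation_general A S ρ hODE hSpos hρ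
end
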